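/- For unit vectors x, y ∈ ℍ^d, |x^*y|² = ⟨xx^*, yy^*⟩ where ⟨A,B⟩ = Re tr(A^*B); moreover, the squared Frobenius norm of the cross-Gramian G_{xy} (with entries ⟨xux^*, yvy^*⟩ for u,v ∈ {i,j,k}) equals 3|x^*y|⁴. -/

import Mathlib

open Matrix BigOperators

/-- The quaternion units `i, j, k`. -/
def qunit : Fin 3 → Quaternion ℝ := ![⟨0,1,0,0⟩, ⟨0,0,1,0⟩, ⟨0,0,0,1⟩]

/-- The matrix `x z x^*` for `x ∈ ℍ^d`, `z ∈ ℍ`. -/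
noncomputable def xzxStar {d : ℕ} (x : Fin d → Quaternion ℝ) (z : Quaternion ℝ) :
    Matrix (Fin d) (Fin d) (Quaternion ℝ) :=
  fun i j => x i * z * star (x j)

/-- The real inner product `⟨A,B⟩ = Re tr(A^*B)` on `ℍ^{d×d}`. -/
noncomputable def qmInner {d : ℕ} (A B : Matrix (Fin d) (Fin d) (Quaternion ℝ)) : ℝ :=
  (Matrix.trace (Aᴴ * B)).re

/-- The quaternionic inner product `x^*y = ∑ᵢ x̄ᵢ yᵢ`. -/
noncomputable def qvInner {d : ℕ} (x y : Fin d → Quaternion ℝ) : Quaternion ℝ :=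
  ∑ i, star (x i) * y i

/-- The rank-one matrix `x x^*`. -/
noncomputable def qRankOne {d : ℕ} (x : Fin d → Quaternion ℝ) :
    Matrix (Fin d) (Fin d) (Quaternion ℝ) :=
  fun i j => x i * star (x j)

/-- The `3×3` cross-Gramian of `S(x)` and `S(y)`. -/
noncomputable def crossGram {d : ℕ} (x y : Fin d → Quaternion ℝ) : Matrix (Fin 3) (Fin 3) ℝ :=
  fun a b => qmInner (xzxStar x (qunit a)) (xzxStar y (qunit b))

/-! Expanding the trace gives `⟨x z x^*, y w y^*⟩ = Re(q̄ z̄ q w)` with `q = x^*y`. For `z = w = 1`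
this is `|q|²`. For imaginary units `z, w`, the quaternion `p = q̄ z̄ q` is purely imaginary of norm
`|q|²`, and `Re(p w)` for `w = i, j, k` reads off its three coordinates (up to sign), so every row of
the cross-Gramian has squared norm `|q|⁴`. -/

namespace Quaternion

variable {R : Type*} [CommRing R]

theorem re_sum {ι : Type*} (s : Finset ι) (f : ι → ℍ[R]) :
    (∑ i ∈ s, f i).re = ∑ i ∈ s, (f i).re :=
  map_sum (QuaternionAlgebra.reₗ (-1 : R) 0 (-1)) f s

theorem re_mul_comm (a b : ℍ[R]) : (a * b).re = (b * a).re := by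
  simp only [re_mul]; ring

theorem re_star_mul_mul_self (q u : ℍ[R]) : (star q * u * q).re = normSq q * u.re := by
  rw [re_mul_comm, ← mul_assoc, self_mul_star, coe_mul_eq_smul, re_smul, smul_eq_mul]

end Quaternion

open Quaternion

theorem trace_conjTranspose_xzxStar_mul {d : ℕ} (x y : Fin d → ℍ[ℝ]) (z w : ℍ[ℝ]) :
    ((xzxStar x z)ᴴ * xzxStar y w).trace = ∑ i, x i * (star z * qvInner x y * w) * star (y i) := by
  simp [Matrix.trace, Matrix.mul_apply, xzxStar, qvInner, Finset.mul_sum, Finset.sum_mul, mul_assoc]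

theorem re_sum_mul_mul_star {d : ℕ} (x y : Fin d → ℍ[ℝ]) (c : ℍ[ℝ]) :
    (∑ i, x i * c * star (y i)).re = (star (qvInner x y) * c).re := by
  simp only [qvInner, star_sum, star_mul, star_star, Finset.sum_mul, re_sum]
  exact Finset.sum_congr rfl fun i _ => by rw [re_mul_comm, ← mul_assoc]

theorem qmInner_xzxStar {d : ℕ} (x y : Fin d → ℍ[ℝ]) (z w : ℍ[ℝ]) :
    qmInner (xzxStar x z) (xzxStar y w) = (star (qvInner x y) * star z * qvInner x y * w).re := by
  rw [qmInner, trace_conjTranspose_xzxStar_mul, re_sum_mul_mul_star]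
  simp only [mul_assoc]

theorem qRankOne_eq_xzxStar_one {d : ℕ} (x : Fin d → ℍ[ℝ]) : qRankOne x = xzxStar x 1 := by
  funext i j; simp [qRankOne, xzxStar]

theorem sum_sq_re_mul_qunit (p : ℍ[ℝ]) :
    ∑ b, ((p * qunit b).re) ^ 2 = normSq p - p.re ^ 2 := by
  simp only [Fin.sum_univ_three, normSq_def', re_mul, qunit, cons_val]
  ring

theorem normSq_qunit (a : Fin 3) : normSq (qunit a) = 1 := by
  rw [normSq_def']
  fin_cases a <;> simp [qunit]

theorem re_qunit (a : Fin 3) : (qunit a).re = 0 := by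
  fin_cases a <;> rfl

theorem sum_sq_re_conj_qunit_mul_qunit (q : ℍ[ℝ]) :
    ∑ a, ∑ b, ((star q * star (qunit a) * q * qunit b).re) ^ 2 = 3 * normSq q ^ 2 :=
  calc ∑ a, ∑ b, ((star q * star (qunit a) * q * qunit b).re) ^ 2
      = ∑ _a : Fin 3, normSq q ^ 2 := Finset.sum_congr rfl fun a _ => by
        rw [sum_sq_re_mul_qunit, re_star_mul_mul_self, re_star, re_qunit, map_mul, map_mul,
          normSq_star, normSq_star, normSq_qunit]
        ring
    _ = 3 * normSq q ^ 2 := by simp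

theorem cross_gram_frobenius_general (d : ℕ) (x y : Fin d → Quaternion ℝ) :
    Quaternion.normSq (qvInner x y) = qmInner (qRankOne x) (qRankOne y) ∧
    (∑ a : Fin 3, ∑ b : Fin 3, (crossGram x y a b) ^ 2)
      = 3 * (Quaternion.normSq (qvInner x y)) ^ 2 := by
  constructor
  · rw [qRankOne_eq_xzxStar_one, qRankOne_eq_xzxStar_one, qmInner_xzxStar, star_one, mul_one,
      mul_one, star_mul_self, re_coe]
  · simpa only [crossGram, qmInner_xzxStar] using sum_sq_re_conj_qunit_mul_qunit (qvInner x y)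

/-- For unit `x, y ∈ ℍ^d`: `|x^*y|² = ⟨xx^*, yy^*⟩`, and the squared Frobenius
norm of the cross-Gramian equals `3|x^*y|⁴`. -/
theorem cross_gram_frobenius (d : ℕ) (x y : Fin d → Quaternion ℝ)
    (hx : qvInner x x = 1) (hy : qvInner y y = 1) :
    Quaternion.normSq (qvInner x y) = qmInner (qRankOne x) (qRankOne y) ∧
    (∑ a : Fin 3, ∑ b : Fin 3, (crossGram x y a b) ^ 2)
      = 3 * (Quaternion.normSq (qvInner x y)) ^ 2 :=
  cross_gram_frobenius_general d x y
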